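/- Let k ≥ 1 and let D be the 'diamond' graph with vertex set {a, b, c, v_1, …, v_k, u_1, …, u_k} and edge set {(a,c)} ∪ {(a,v_i), (v_i,b), (b,u_i), (u_i,c) : 1 ≤ i ≤ k}. Then the simple cycles of D are exactly: (1) the cycles a, v_i, b, u_j, c, a for 1 ≤ i, j ≤ k; (2) the cycles a, v_i, b, v_j, a for 1 ≤ i < j ≤ k; (3) the cycles b, u_i, c, u_j, b for 1 ≤ i < j ≤ k. In particular D has exactly k^2 + k(k−1) = 2k^2 − k simple cycles. -/

import Mathlib

open SimpleGraph

/-- The vertices of the diamond graph: `a`, `b`, `c`, `v 1, …, v k`, `u 1, …, u k`. -/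
inductive DV (k : ℕ) where
  | a : DV k
  | b : DV k
  | c : DV k
  | v (i : Fin k) : DV k
  | u (i : Fin k) : DV k
deriving DecidableEq

/-- The diamond graph `D`: edges `{a,c}` and `{a, v i}, {v i, b}, {b, u i}, {u i, c}`
for `1 ≤ i ≤ k`. -/
def diamond (k : ℕ) : SimpleGraph (DV k) :=
  SimpleGraph.fromRel (fun x y =>
    (x = DV.a ∧ y = DV.c) ∨
    (∃ i, x = DV.a ∧ y = DV.v i) ∨ (∃ i, x = DV.v i ∧ y = DV.b) ∨
    (∃ i, x = DV.b ∧ y = DV.u i) ∨ (∃ i, x = DV.u i ∧ y = DV.c))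

/-- The set of simple cycles of the diamond graph, where a simple cycle (counted up to
rotation and reflection) is identified with its edge set. -/
def diamondCycles (k : ℕ) : Set (Finset (Sym2 (DV k))) :=
  {S | ∃ (x : DV k) (c : (diamond k).Walk x x), c.IsCycle ∧ c.edges.toFinset = S}

/-!
Every cycle passes through `a` or `c`: a cycle through `v i` (resp. `u i`) uses both neighbours
`a, b` (resp. `b, c`) of that vertex, and a cycle through `b` passes through some `v i` or `u i`.
A cycle through `a`, rotated to start at `a` and reversed if necessary, leaves `a` towards some
`v i`; it is then forced through `b` and closes either through `v j, a` or through `u j, c, a`.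
A cycle through `c` avoiding `a` is forced to be `c, u i, b, u j, c`. The `k²` pentagons and the
`k.choose 2` squares of each kind have pairwise distinct edge sets, which gives the count.
-/

namespace SimpleGraph.Walk

variable {V : Type*} {G : SimpleGraph V}

lemma IsCycle.mem_support_of_neighborSet_subset {u x y z : V} {c : G.Walk u u}
    (hc : c.IsCycle) (hx : x ∈ c.support) (hN : G.neighborSet x ⊆ {y, z}) :
    y ∈ c.support ∧ z ∈ c.support := by
  classical
  set c' := c.rotate x hx
  have hc' : c'.IsCycle := hc.rotate hx
  have hsnd : c'.snd ∈ ({y, z} : Set V) := hN (adj_snd hc'.not_nil)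
  have hpen : c'.penultimate ∈ ({y, z} : Set V) := hN (adj_penultimate hc'.not_nil).symm
  have hmem (n : ℕ) : c'.getVert n ∈ c.support :=
    (mem_support_rotate_iff ..).1 (getVert_mem_support _ n)
  have hne := hc'.snd_ne_penultimate
  have h₁ := hmem 1
  have h₂ := hmem (c'.length - 1)
  simp only [Set.mem_insert_iff, Set.mem_singleton_iff] at hsnd hpen
  rcases hsnd with h | h <;> rcases hpen with h' | h' <;> simp_all [snd, penultimate]

end SimpleGraph.Walk

lemma Fintype.ncard_setOf_fst_lt_snd (α : Type*) [Fintype α] [LinearOrder α] :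
    {p : α × α | p.1 < p.2}.ncard = (Fintype.card α).choose 2 := by
  simpa [← Set.ncard_coe_finset] using Fintype.card_product_filter_lt (α := α)

lemma Nat.two_mul_choose_two (n : ℕ) : 2 * n.choose 2 = n * n - n := by
  rw [Nat.choose_two_right, Nat.mul_div_cancel' (even_iff_two_dvd.1 (Nat.even_mul_pred_self n)),
    Nat.mul_sub_one]

namespace diamond

variable {k : ℕ}

open Walk

lemma adj_a_iff {y : DV k} : (diamond k).Adj .a y ↔ y = .c ∨ ∃ i, y = .v i := by
  simp only [diamond, fromRel_adj]; aesop

lemma adj_b_iff {y : DV k} : (diamond k).Adj .b y ↔ (∃ i, y = .v i) ∨ ∃ i, y = .u i := by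
  simp only [diamond, fromRel_adj]; aesop

lemma adj_c_iff {y : DV k} : (diamond k).Adj .c y ↔ y = .a ∨ ∃ i, y = .u i := by
  simp only [diamond, fromRel_adj]; aesop

lemma adj_v_iff {i : Fin k} {y : DV k} : (diamond k).Adj (.v i) y ↔ y = .a ∨ y = .b := by
  simp only [diamond, fromRel_adj]; aesop

lemma adj_u_iff {i : Fin k} {y : DV k} : (diamond k).Adj (.u i) y ↔ y = .b ∨ y = .c := by
  simp only [diamond, fromRel_adj]; aesop

lemma adj_a_v (i : Fin k) : (diamond k).Adj .a (.v i) := adj_a_iff.2 (.inr ⟨i, rfl⟩)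

lemma adj_v_b (i : Fin k) : (diamond k).Adj (.v i) .b := adj_v_iff.2 (.inr rfl)

lemma adj_b_u (i : Fin k) : (diamond k).Adj .b (.u i) := adj_b_iff.2 (.inr ⟨i, rfl⟩)

lemma adj_u_c (i : Fin k) : (diamond k).Adj (.u i) .c := adj_u_iff.2 (.inr rfl)

lemma adj_c_a : (diamond k).Adj .c .a := adj_c_iff.2 (.inl rfl)

def pentagon (i j : Fin k) : Finset (Sym2 (DV k)) :=
  {s(.a, .v i), s(.v i, .b), s(.b, .u j), s(.u j, .c), s(.c, .a)}

def vSquare (i j : Fin k) : Finset (Sym2 (DV k)) :=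
  {s(.a, .v i), s(.v i, .b), s(.b, .v j), s(.v j, .a)}

def uSquare (i j : Fin k) : Finset (Sym2 (DV k)) :=
  {s(.b, .u i), s(.u i, .c), s(.c, .u j), s(.u j, .b)}

lemma vSquare_comm (i j : Fin k) : vSquare i j = vSquare j i := by
  ext; simp [vSquare, Sym2.eq_swap]; tauto

lemma uSquare_comm (i j : Fin k) : uSquare i j = uSquare j i := by
  ext; simp [uSquare, Sym2.eq_swap]; tauto

lemma pentagon_mem_diamondCycles (i j : Fin k) : pentagon i j ∈ diamondCycles k :=
  ⟨_, cons (adj_a_v i) <| cons (adj_v_b i) <| cons (adj_b_u j) <| cons (adj_u_c j) <|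
    cons adj_c_a nil, by simp [cons_isCycle_iff], by simp [pentagon, Sym2.eq_swap]⟩

lemma vSquare_mem_diamondCycles {i j : Fin k} (hij : i ≠ j) : vSquare i j ∈ diamondCycles k :=
  ⟨_, cons (adj_a_v i) <| cons (adj_v_b i) <| cons (adj_v_b j).symm <| cons (adj_a_v j).symm nil,
    by simp [cons_isCycle_iff, hij], by simp [vSquare, Sym2.eq_swap]⟩

lemma uSquare_mem_diamondCycles {i j : Fin k} (hij : i ≠ j) : uSquare i j ∈ diamondCycles k :=
  ⟨_, cons (adj_b_u i) <| cons (adj_u_c i) <| cons (adj_u_c j).symm <| cons (adj_b_u j).symm nil,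
    by simp [cons_isCycle_iff, hij], by simp [uSquare, Sym2.eq_swap]⟩

lemma neighborSet_v_subset (i : Fin k) : (diamond k).neighborSet (.v i) ⊆ {.a, .b} :=
  fun _ hy => adj_v_iff.1 hy

lemma neighborSet_u_subset (i : Fin k) : (diamond k).neighborSet (.u i) ⊆ {.b, .c} :=
  fun _ hy => adj_u_iff.1 hy

lemma a_mem_support_or_c_mem_support {x : DV k} {w : (diamond k).Walk x x}
    (hw : w.IsCycle) : .a ∈ w.support ∨ .c ∈ w.support := by
  have hv (i : Fin k) (hi : .v i ∈ w.support) : .a ∈ w.support :=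
    (hw.mem_support_of_neighborSet_subset hi (neighborSet_v_subset i)).1
  have hu (i : Fin k) (hi : .u i ∈ w.support) : .c ∈ w.support :=
    (hw.mem_support_of_neighborSet_subset hi (neighborSet_u_subset i)).2
  cases x with
  | a => exact .inl w.start_mem_support
  | c => exact .inr w.start_mem_support
  | v i => exact .inl (hv i w.start_mem_support)
  | u i => exact .inr (hu i w.start_mem_support)
  | b =>
    have hsnd : w.snd ∈ w.support := w.getVert_mem_support 1
    obtain ⟨i, hi⟩ | ⟨i, hi⟩ := adj_b_iff.1 (w.adj_snd hw.not_nil)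
    · exact .inl (hv i (hi ▸ hsnd))
    · exact .inr (hu i (hi ▸ hsnd))

lemma edges_of_isCycle_cons_a_v {i : Fin k} (h : (diamond k).Adj .a (.v i))
    (p : (diamond k).Walk (.v i) .a) (hc : (cons h p).IsCycle) :
    (∃ j, (cons h p).edges.toFinset = pentagon i j) ∨
      ∃ j, j ≠ i ∧ (cons h p).edges.toFinset = vSquare i j := by
  have hs := hc.support_nodup
  have he := hc.edges_nodup
  cases p with | cons h₁ p =>
  obtain rfl | rfl := adj_v_iff.1 h₁
  · cases p with
    | nil => simp [Sym2.eq_swap] at he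
    | cons _ _ => simp at hs
  cases p with | cons h₂ p =>
  obtain ⟨j, rfl⟩ | ⟨j, rfl⟩ := adj_b_iff.1 h₂
  · cases p with | cons h₃ p =>
    obtain rfl | rfl := adj_v_iff.1 h₃
    · cases p with
      | nil =>
        refine .inr ⟨j, fun hji => by simp [hji] at hs, ?_⟩
        ext; simp [vSquare, Sym2.eq_swap]
      | cons _ _ => simp at hs
    · simp at hs
  · cases p with | cons h₃ p =>
    obtain rfl | rfl := adj_u_iff.1 h₃
    · simp at hs
    cases p with | cons h₄ p =>
    obtain rfl | ⟨l, rfl⟩ := adj_c_iff.1 h₄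
    · cases p with
      | nil => exact .inl ⟨j, by ext; simp [pentagon, Sym2.eq_swap]⟩
      | cons _ _ => simp at hs
    · cases p with | cons h₅ p =>
      obtain rfl | rfl := adj_u_iff.1 h₅ <;> simp at hs

lemma edges_of_isCycle_cons_c_u {i : Fin k} (h : (diamond k).Adj .c (.u i))
    (p : (diamond k).Walk (.u i) .c) (hc : (cons h p).IsCycle) (ha : DV.a ∉ p.support) :
    ∃ j, j ≠ i ∧ (cons h p).edges.toFinset = uSquare i j := by
  have hs := hc.support_nodup
  have he := hc.edges_nodup
  cases p with | cons h₁ p =>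
  obtain rfl | rfl := adj_u_iff.1 h₁
  swap
  · cases p with
    | nil => simp [Sym2.eq_swap] at he
    | cons _ _ => simp at hs
  cases p with | cons h₂ p =>
  obtain ⟨j, rfl⟩ | ⟨j, rfl⟩ := adj_b_iff.1 h₂
  · cases p with | cons h₃ p =>
    obtain rfl | rfl := adj_v_iff.1 h₃ <;> simp at ha hs
  · cases p with | cons h₃ p =>
    obtain rfl | rfl := adj_u_iff.1 h₃
    · simp at hs
    cases p with
    | nil =>
      refine ⟨j, fun hji => by simp [hji] at hs, ?_⟩
      ext; simp [uSquare, Sym2.eq_swap]; tauto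
    | cons _ _ => simp at hs

lemma edges_of_isCycle_at_a {w : (diamond k).Walk .a .a} (hw : w.IsCycle) :
    (∃ i j, w.edges.toFinset = pentagon i j) ∨
      ∃ i j, i < j ∧ w.edges.toFinset = vSquare i j := by
  wlog hsnd : w.snd ≠ .c generalizing w
  · -- the reversed cycle leaves `a` along the last edge of `w`, which differs from the first
    have hrev := this hw.reverse <| by
      rw [snd_reverse, ← not_not.1 hsnd]
      exact hw.snd_ne_penultimate.symm
    simpa only [edges_reverse, List.toFinset_reverse] using hrev
  cases w with
  | nil => exact absurd hw (by simp)
  | cons h p =>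
  obtain rfl | ⟨i, rfl⟩ := adj_a_iff.1 h
  · simp at hsnd
  obtain ⟨j, hj⟩ | ⟨j, hji, hj⟩ := edges_of_isCycle_cons_a_v h p hw
  · exact .inl ⟨i, j, hj⟩
  · obtain hij | hji := hji.symm.lt_or_gt
    · exact .inr ⟨i, j, hij, hj⟩
    · exact .inr ⟨j, i, hji, vSquare_comm i j ▸ hj⟩

lemma edges_of_isCycle_at_c {w : (diamond k).Walk .c .c} (hw : w.IsCycle)
    (ha : DV.a ∉ w.support) : ∃ i j, i < j ∧ w.edges.toFinset = uSquare i j := by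
  cases w with
  | nil => exact absurd hw (by simp)
  | cons h p =>
  obtain rfl | ⟨i, rfl⟩ := adj_c_iff.1 h
  · simp at ha
  obtain ⟨j, hji, hj⟩ := edges_of_isCycle_cons_c_u h p hw (fun h' => ha (by simp [h']))
  obtain hij | hji := hji.symm.lt_or_gt
  · exact ⟨i, j, hij, hj⟩
  · exact ⟨j, i, hji, uSquare_comm i j ▸ hj⟩

theorem diamondCycles_eq : diamondCycles k =
    {S | (∃ i j, S = pentagon i j) ∨ (∃ i j, i < j ∧ S = vSquare i j) ∨
      ∃ i j, i < j ∧ S = uSquare i j} := by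
  classical
  ext S
  constructor
  · rintro ⟨x, w, hw, rfl⟩
    by_cases ha : DV.a ∈ w.support
    · rw [← List.toFinset_eq_of_perm _ _ (w.rotate_edges _ ha).perm]
      obtain ⟨i, j, h⟩ | ⟨i, j, hij, h⟩ := edges_of_isCycle_at_a (hw.rotate ha)
      · exact .inl ⟨i, j, h⟩
      · exact .inr (.inl ⟨i, j, hij, h⟩)
    · have hc := (a_mem_support_or_c_mem_support hw).resolve_left ha
      rw [← List.toFinset_eq_of_perm _ _ (w.rotate_edges _ hc).perm]
      obtain ⟨i, j, hij, h⟩ :=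
        edges_of_isCycle_at_c (hw.rotate hc) (by rwa [mem_support_rotate_iff])
      exact .inr (.inr ⟨i, j, hij, h⟩)
  · rintro (⟨i, j, rfl⟩ | ⟨i, j, hij, rfl⟩ | ⟨i, j, hij, rfl⟩)
    · exact pentagon_mem_diamondCycles i j
    · exact vSquare_mem_diamondCycles hij.ne
    · exact uSquare_mem_diamondCycles hij.ne

lemma pentagon_injective : Function.Injective (Function.uncurry (pentagon (k := k))) := by
  rintro ⟨i, j⟩ ⟨i', j'⟩ h
  simp only [Function.uncurry_apply_pair] at h
  have hi : s(.a, .v i) ∈ pentagon i' j' := h ▸ by simp [pentagon]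
  have hj : s(.b, .u j) ∈ pentagon i' j' := h ▸ by simp [pentagon]
  simp_all [pentagon]

lemma vSquare_injOn : Set.InjOn (Function.uncurry (vSquare (k := k))) {p | p.1 < p.2} := by
  rintro ⟨i, j⟩ hij ⟨i', j'⟩ hij' h
  simp only [Function.uncurry_apply_pair, Set.mem_ofPred_eq] at h hij hij'
  have hi : s(.a, .v i) ∈ vSquare i' j' := h ▸ by simp [vSquare]
  have hj : s(.b, .v j) ∈ vSquare i' j' := h ▸ by simp [vSquare]
  simp [vSquare] at hi hj
  simp only [Prod.mk.injEq]
  omega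

lemma uSquare_injOn : Set.InjOn (Function.uncurry (uSquare (k := k))) {p | p.1 < p.2} := by
  rintro ⟨i, j⟩ hij ⟨i', j'⟩ hij' h
  simp only [Function.uncurry_apply_pair, Set.mem_ofPred_eq] at h hij hij'
  have hi : s(.b, .u i) ∈ uSquare i' j' := h ▸ by simp [uSquare]
  have hj : s(.c, .u j) ∈ uSquare i' j' := h ▸ by simp [uSquare]
  simp [uSquare] at hi hj
  simp only [Prod.mk.injEq]
  omega

lemma pentagon_ne_vSquare (i j i' j' : Fin k) : pentagon i j ≠ vSquare i' j' := fun h => by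
  have : s(.c, .a) ∈ vSquare i' j' := h ▸ by simp [pentagon]
  simp [vSquare] at this

lemma pentagon_ne_uSquare (i j i' j' : Fin k) : pentagon i j ≠ uSquare i' j' := fun h => by
  have : s(.c, .a) ∈ uSquare i' j' := h ▸ by simp [pentagon]
  simp [uSquare] at this

lemma vSquare_ne_uSquare (i j i' j' : Fin k) : vSquare i j ≠ uSquare i' j' := fun h => by
  have : s(.a, .v i) ∈ uSquare i' j' := h ▸ by simp [vSquare]
  simp [uSquare] at this

theorem ncard_diamondCycles : (diamondCycles k).ncard = 2 * k ^ 2 - k := by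
  have hsplit : diamondCycles k = Set.range (Function.uncurry pentagon) ∪
      (Function.uncurry vSquare '' {p | p.1 < p.2} ∪
        Function.uncurry uSquare '' {p | p.1 < p.2}) := by
    ext S
    simp [diamondCycles_eq, eq_comm]
  have hdisj₁ : Disjoint (Set.range (Function.uncurry (pentagon (k := k))))
      (Function.uncurry vSquare '' {p | p.1 < p.2} ∪
        Function.uncurry uSquare '' {p | p.1 < p.2}) := Set.disjoint_left.2 <| by
    rintro _ ⟨⟨i, j⟩, rfl⟩ (⟨⟨i', j'⟩, -, h⟩ | ⟨⟨i', j'⟩, -, h⟩)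
    exacts [pentagon_ne_vSquare i j i' j' h.symm, pentagon_ne_uSquare i j i' j' h.symm]
  have hdisj₂ : Disjoint (Function.uncurry (vSquare (k := k)) '' {p | p.1 < p.2})
      (Function.uncurry uSquare '' {p | p.1 < p.2}) := Set.disjoint_left.2 <| by
    rintro _ ⟨⟨i, j⟩, -, rfl⟩ ⟨⟨i', j'⟩, -, h⟩
    exact vSquare_ne_uSquare i j i' j' h.symm
  rw [hsplit, Set.ncard_union_eq hdisj₁, Set.ncard_union_eq hdisj₂,
    Set.ncard_range_of_injective pentagon_injective, vSquare_injOn.ncard_image,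
    uSquare_injOn.ncard_image, Fintype.ncard_setOf_fst_lt_snd, Nat.card_prod, Nat.card_fin,
    Fintype.card_fin]
  have := Nat.two_mul_choose_two k
  have := Nat.le_mul_self k
  rw [sq]
  omega

end diamond

theorem diamond_cycles_general (k : ℕ) :
    diamondCycles k =
      {S | (∃ i j : Fin k,
              S = {s(DV.a, DV.v i), s(DV.v i, DV.b), s(DV.b, DV.u j),
                   s(DV.u j, DV.c), s(DV.c, DV.a)}) ∨
           (∃ i j : Fin k, i < j ∧
              S = {s(DV.a, DV.v i), s(DV.v i, DV.b), s(DV.b, DV.v j), s(DV.v j, DV.a)}) ∨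
           (∃ i j : Fin k, i < j ∧
              S = {s(DV.b, DV.u i), s(DV.u i, DV.c), s(DV.c, DV.u j), s(DV.u j, DV.b)})} ∧
    (diamondCycles k).ncard = 2 * k ^ 2 - k :=
  ⟨diamond.diamondCycles_eq, diamond.ncard_diamondCycles⟩

/-- For `k ≥ 1`, the simple cycles of the diamond graph are exactly:
(1) `a, v i, b, u j, c, a` for `1 ≤ i, j ≤ k`;
(2) `a, v i, b, v j, a` for `1 ≤ i < j ≤ k`;
(3) `b, u i, c, u j, b` for `1 ≤ i < j ≤ k`.
In particular the diamond graph has exactly `2k² − k` simple cycles. -/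
theorem diamond_cycles (k : ℕ) (hk : 1 ≤ k) :
    diamondCycles k =
      {S | (∃ i j : Fin k,
              S = {s(DV.a, DV.v i), s(DV.v i, DV.b), s(DV.b, DV.u j),
                   s(DV.u j, DV.c), s(DV.c, DV.a)}) ∨
           (∃ i j : Fin k, i < j ∧
              S = {s(DV.a, DV.v i), s(DV.v i, DV.b), s(DV.b, DV.v j), s(DV.v j, DV.a)}) ∨
           (∃ i j : Fin k, i < j ∧
              S = {s(DV.b, DV.u i), s(DV.u i, DV.c), s(DV.c, DV.u j), s(DV.u j, DV.b)})} ∧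
    (diamondCycles k).ncard = 2 * k ^ 2 - k :=
  diamond_cycles_general k
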